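/- The weakening rule, from Γ ⇒ Δ infer Π,Γ ⇒ Δ,Σ, is strongly admissible in Grz∞+cut: there is a nonexpansive mapping wk_{Π,Σ} : 𝒫 → 𝒫 sending any ∞-proof of Γ ⇒ Δ to an ∞-proof of Π,Γ ⇒ Δ,Σ, which maps 𝒫₁ into 𝒫₁ and does not increase local height. -/

import Mathlib

/-!
Weakening is applied to every sequent reachable from the root without entering the right premise
of a (□) node; the subproofs standing on right premises of (□) are kept as they are. Every rule
instance survives adding Π and Σ uniformly to its conclusion and premises, except that the right
premise □Π' ⇒ A of (□) does not see the context, which is why it is left alone. Rule names and the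
tree shape do not change, so neither do the main fragment and the local height, and since the new
proof is built node by node from the old one, ∼ₙ and 𝒫ₙ are preserved.
-/

/-- Modal formulas of the Grzegorczyk logic: ⊥, atoms, →, □. -/
inductive Formula : Type
  | bot : Formula
  | atom : ℕ → Formula
  | imp : Formula → Formula → Formula
  | box : Formula → Formula
deriving DecidableEq

/-- A sequent Γ ⇒ Δ is a pair of finite multisets of formulas. -/
abbrev Sequent : Type := Multiset Formula × Multiset Formula

/-- Names of the inference rules of Grz∞ + cut (including the two kinds of initial sequents). -/
inductive Rule : Type
  | ax | axBot | impL | impR | refl | box | cut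
deriving DecidableEq

/-- □Π for a multiset Π. -/
def boxed (P : Multiset Formula) : Multiset Formula := P.map Formula.box

/-- `Inst r s p₁ p₂` : the rule `r` has a (correct) instance with conclusion `s`,
first premise `p₁` and second premise `p₂` (`none` = no such premise). -/
inductive Inst : Rule → Sequent → Option Sequent → Option Sequent → Prop
  | ax (Γ Δ : Multiset Formula) (p : ℕ) :
      Inst .ax (Formula.atom p ::ₘ Γ, Formula.atom p ::ₘ Δ) none none
  | axBot (Γ Δ : Multiset Formula) :
      Inst .axBot (Formula.bot ::ₘ Γ, Δ) none none
  | impL (Γ Δ : Multiset Formula) (A B : Formula) :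
      Inst .impL (Formula.imp A B ::ₘ Γ, Δ) (some (B ::ₘ Γ, Δ)) (some (Γ, A ::ₘ Δ))
  | impR (Γ Δ : Multiset Formula) (A B : Formula) :
      Inst .impR (Γ, Formula.imp A B ::ₘ Δ) (some (A ::ₘ Γ, B ::ₘ Δ)) none
  | refl (Γ Δ : Multiset Formula) (A : Formula) :
      Inst .refl (Formula.box A ::ₘ Γ, Δ) (some (A ::ₘ Formula.box A ::ₘ Γ, Δ)) none
  | box (Γ Δ : Multiset Formula) (A : Formula) (P : Multiset Formula) :
      Inst .box (Γ + boxed P, Formula.box A ::ₘ Δ) (some (Γ + boxed P, A ::ₘ Δ))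
        (some (boxed P, {A}))
  | cut (Γ Δ : Multiset Formula) (A : Formula) :
      Inst .cut (Γ, Δ) (some (Γ, A ::ₘ Δ)) (some (A ::ₘ Γ, Δ))

/-- A labelling of tree addresses (lists of booleans; `true` = second/right child)
by a rule name together with a sequent; `none` means the address is outside the tree. -/
abbrev Lab : Type := List Bool → Option (Rule × Sequent)

/-- The labelling of the subtree at child `i`. -/
def shift (i : Bool) (l : Lab) : Lab := fun a => l (i :: a)

/-- An ∞-proof in Grz∞ + cut: a possibly infinite tree of sequents built according to
the rules, in which every infinite branch passes through the right premise of the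
rule (□) infinitely many times. -/
structure InfProof : Type where
  lab : Lab
  root_some : (lab []).isSome
  nojunk : ∀ (a : List Bool) (i : Bool), lab a = none → lab (a ++ [i]) = none
  step : ∀ (a : List Bool) (r : Rule) (s : Sequent), lab a = some (r, s) →
      Inst r s ((lab (a ++ [false])).map Prod.snd) ((lab (a ++ [true])).map Prod.snd)
  branch : ∀ f : ℕ → Bool, (∀ n : ℕ, (lab ((List.range n).map f)).isSome) →
      ∀ N : ℕ, ∃ n : ℕ, N ≤ n ∧ f n = true ∧
        (lab ((List.range n).map f)).map Prod.fst = some Rule.box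

/-- The sequent at the root of an ∞-proof. -/
def rootSeq (π : InfProof) : Sequent := ((π.lab []).map Prod.snd).getD (0, 0)

/-- `Proves π S` : the ∞-proof `π` is an ∞-proof of the sequent `S`. -/
def Proves (π : InfProof) (S : Sequent) : Prop := ∃ r : Rule, π.lab [] = some (r, S)

/-- An ∞-proof contains no application of the cut rule (i.e. it is a proof of Grz∞). -/
def NoCut (π : InfProof) : Prop := ∀ (a : List Bool) (r : Rule) (s : Sequent),
  π.lab a = some (r, s) → r ≠ Rule.cut

/-- Membership of an address in the main fragment: no proper passage through a
right premise of (□) strictly below it. -/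
def InMain (l : Lab) (a : List Bool) : Prop :=
  (l a).isSome ∧ ∀ (b c : List Bool), a = b ++ true :: c →
    (l b).map Prod.fst = some Rule.box → c = []

/-- The local height |π| : the length of the longest branch in the main fragment. -/
noncomputable def height (l : Lab) : ℕ := sSup {n : ℕ | ∃ a : List Bool, InMain l a ∧ a.length = n}

/-- The relations ∼ₙ on ∞-proofs (presented on labellings), defined inductively:
π ∼₀ τ always; a single-node proof is ∼ₙ-related to itself; proofs ending in the same
instance of (→L), (cut), (→R), (refl) are ∼ₙ-related when their immediate subproofs are;
proofs ending in the same instance of (□) are ∼ₙ₊₁-related when the left-premise subproofs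
are ∼ₙ₊₁-related and the right-premise subproofs are ∼ₙ-related. -/
inductive Sim : ℕ → Lab → Lab → Prop
  | zero (l m : Lab) : Sim 0 l m
  | leaf (n : ℕ) (l : Lab) : height l = 0 → Sim n l l
  | bin (n : ℕ) (l m : Lab) (r : Rule) (s : Sequent) :
      (r = Rule.impL ∨ r = Rule.cut) →
      l [] = some (r, s) → m [] = some (r, s) →
      (l [false]).map Prod.snd = (m [false]).map Prod.snd →
      (l [true]).map Prod.snd = (m [true]).map Prod.snd →
      Sim n (shift false l) (shift false m) → Sim n (shift true l) (shift true m) →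
      Sim n l m
  | un (n : ℕ) (l m : Lab) (r : Rule) (s : Sequent) :
      (r = Rule.impR ∨ r = Rule.refl) →
      l [] = some (r, s) → m [] = some (r, s) →
      (l [false]).map Prod.snd = (m [false]).map Prod.snd →
      Sim n (shift false l) (shift false m) →
      Sim n l m
  | box (n : ℕ) (l m : Lab) (s : Sequent) :
      l [] = some (Rule.box, s) → m [] = some (Rule.box, s) →
      (l [false]).map Prod.snd = (m [false]).map Prod.snd →
      (l [true]).map Prod.snd = (m [true]).map Prod.snd →
      Sim (n + 1) (shift false l) (shift false m) → Sim n (shift true l) (shift true m) →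
      Sim (n + 1) l m

/-- The sets 𝒫ₙ of ∞-proofs (presented on labellings), defined inductively:
𝒫₀ is everything; single-node proofs are in every 𝒫ₙ; (→L), (→R), (refl) preserve
membership in 𝒫ₙ; a proof ending in (□) with left-premise subproof in 𝒫ₙ₊₁ and
right-premise subproof in 𝒫ₙ is in 𝒫ₙ₊₁. -/
inductive MemP : ℕ → Lab → Prop
  | zero (l : Lab) : MemP 0 l
  | leaf (n : ℕ) (l : Lab) : height l = 0 → MemP n l
  | bin (n : ℕ) (l : Lab) (s : Sequent) :
      l [] = some (Rule.impL, s) →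
      MemP n (shift false l) → MemP n (shift true l) → MemP n l
  | un (n : ℕ) (l : Lab) (r : Rule) (s : Sequent) :
      (r = Rule.impR ∨ r = Rule.refl) →
      l [] = some (r, s) → MemP n (shift false l) → MemP n l
  | box (n : ℕ) (l : Lab) (s : Sequent) :
      l [] = some (Rule.box, s) →
      MemP (n + 1) (shift false l) → MemP n (shift true l) → MemP (n + 1) l

/- The metric d(π,τ) = 2^(−sup{n : π ∼ₙ τ}), with 2^(−∞) = 0. -/
open Classical in
noncomputable def pdist (π τ : InfProof) : ℝ :=
  if ∀ n : ℕ, Sim n π.lab τ.lab then 0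
  else (2 : ℝ) ^ (-((sSup {n : ℕ | Sim n π.lab τ.lab} : ℕ) : ℤ))

/-- A mapping on ∞-proofs is nonexpansive if it preserves all relations ∼ₙ. -/
def Nonexpansive (f : InfProof → InfProof) : Prop :=
  ∀ (n : ℕ) (π τ : InfProof), Sim n π.lab τ.lab → Sim n (f π).lab (f τ).lab

/-- A mapping is adequate if it is nonexpansive, maps 𝒫₁ into 𝒫₁,
and does not increase local height. -/
def Adequate (f : InfProof → InfProof) : Prop :=
  Nonexpansive f ∧ (∀ π : InfProof, MemP 1 π.lab → MemP 1 (f π).lab) ∧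
    ∀ π : InfProof, height (f π).lab ≤ height π.lab

/-- The set 𝒫₁ of ∞-proofs whose main fragment is cut-free, as a subtype. -/
abbrev P1 : Type := {π : InfProof // MemP 1 π.lab}

/-- An A-reducing mapping: a nonexpansive map ℛ : 𝒫₁ × 𝒫₁ → 𝒫₁ such that
ℛ(π′,π″) proves Γ ⇒ Δ whenever π′ proves Γ ⇒ Δ, A and π″ proves A, Γ ⇒ Δ. -/
def Reducing (A : Formula) (R : P1 → P1 → P1) : Prop :=
  (∀ (n : ℕ) (p₁ p₂ q₁ q₂ : P1), Sim n p₁.1.lab q₁.1.lab → Sim n p₂.1.lab q₂.1.lab →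
      Sim n (R p₁ p₂).1.lab (R q₁ q₂).1.lab) ∧
  ∀ (p₁ p₂ : P1) (Γ Δ : Multiset Formula),
    Proves p₁.1 (Γ, A ::ₘ Δ) → Proves p₂.1 (A ::ₘ Γ, Δ) → Proves (R p₁ p₂).1 (Γ, Δ)

/-- A mapping is root-preserving if it maps ∞-proofs to ∞-proofs of the same sequent. -/
def RootPres (f : InfProof → InfProof) : Prop :=
  ∀ (π : InfProof) (S : Sequent), Proves π S → Proves (f π) S

/-- The uniform distance on mappings of ∞-proofs. -/
noncomputable def udist (U V : InfProof → InfProof) : ℝ :=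
  ⨆ π : InfProof, pdist (U π) (V π)

/- The immediate subproof of `π` at child `i` (junk value `π` if there is none). -/
open Classical in
noncomputable def subtree (π : InfProof) (i : Bool) : InfProof :=
  if h : ∃ τ : InfProof, τ.lab = shift i π.lab then h.choose else π

/-- `IsFOp E F` : `F` is the operator ℱ (relative to the one-step cut-elimination map
`E` = ℰ*) defined by: on proofs with cut-free main fragment it commutes with the last
rule, applying `U` at right premises of (□) and fixing single-node proofs; on other
proofs it first applies `E`. -/
def IsFOp (E : InfProof → InfProof) (F : (InfProof → InfProof) → InfProof → InfProof) : Prop :=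
  ∀ (U : InfProof → InfProof) (π : InfProof),
    (MemP 1 π.lab → height π.lab = 0 → F U π = π) ∧
    (∀ (r : Rule) (s : Sequent), MemP 1 π.lab → π.lab [] = some (r, s) →
        r ≠ Rule.box → r ≠ Rule.cut → height π.lab ≠ 0 →
        (F U π).lab [] = some (r, s) ∧
        shift false (F U π).lab = (F U (subtree π false)).lab ∧
        (r = Rule.impL → shift true (F U π).lab = (F U (subtree π true)).lab)) ∧
    (∀ s : Sequent, MemP 1 π.lab → π.lab [] = some (Rule.box, s) →
        (F U π).lab [] = some (Rule.box, s) ∧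
        shift false (F U π).lab = (F U (subtree π false)).lab ∧
        shift true (F U π).lab = (U (subtree π true)).lab) ∧
    (¬ MemP 1 π.lab → F U π = F U (E π))

/-- Membership in 𝒩ₙ : a root-preserving nonexpansive map whose image lies in 𝒫ₙ. -/
def InN (n : ℕ) (U : InfProof → InfProof) : Prop :=
  Nonexpansive U ∧ RootPres U ∧ ∀ π : InfProof, MemP n (U π).lab

/-- The finitary sequent calculus Grz_Seq (with cut allowed iff the flag is `true`). -/
inductive GrzSeq : Bool → Sequent → Prop
  | ax (c : Bool) (Γ Δ : Multiset Formula) (A : Formula) :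
      GrzSeq c (A ::ₘ Γ, A ::ₘ Δ)
  | bot (c : Bool) (Γ Δ : Multiset Formula) :
      GrzSeq c (Formula.bot ::ₘ Γ, Δ)
  | impL (c : Bool) (Γ Δ : Multiset Formula) (A B : Formula) :
      GrzSeq c (B ::ₘ Γ, Δ) → GrzSeq c (Γ, A ::ₘ Δ) →
      GrzSeq c (Formula.imp A B ::ₘ Γ, Δ)
  | impR (c : Bool) (Γ Δ : Multiset Formula) (A B : Formula) :
      GrzSeq c (A ::ₘ Γ, B ::ₘ Δ) → GrzSeq c (Γ, Formula.imp A B ::ₘ Δ)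
  | refl (c : Bool) (Γ Δ : Multiset Formula) (B : Formula) :
      GrzSeq c (B ::ₘ Formula.box B ::ₘ Γ, Δ) → GrzSeq c (Formula.box B ::ₘ Γ, Δ)
  | grz (c : Bool) (Γ Δ : Multiset Formula) (A : Formula) (P : Multiset Formula) :
      GrzSeq c (Formula.box (Formula.imp A (Formula.box A)) ::ₘ boxed P, {A}) →
      GrzSeq c (Γ + boxed P, Formula.box A ::ₘ Δ)
  | cut (Γ Δ : Multiset Formula) (A : Formula) :
      GrzSeq true (Γ, A ::ₘ Δ) → GrzSeq true (A ::ₘ Γ, Δ) → GrzSeq true (Γ, Δ)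

namespace Weakening

def RootIsBox (l : Lab) : Prop := (l []).map Prod.fst = some Rule.box

instance : DecidablePred RootIsBox := fun _ => inferInstanceAs (Decidable (_ = _))

lemma rootIsBox_iff {l : Lab} {r : Rule} {s : Sequent} (hl : l [] = some (r, s)) :
    RootIsBox l ↔ r = Rule.box := by
  simp [RootIsBox, hl]

def InstAt (l : Lab) (a : List Bool) : Prop :=
  ∀ (r : Rule) (s : Sequent), l a = some (r, s) →
    Inst r s ((l (a ++ [false])).map Prod.snd) ((l (a ++ [true])).map Prod.snd)

lemma instAt_cons_iff {l : Lab} {i : Bool} {a : List Bool} :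
    InstAt l (i :: a) ↔ InstAt (shift i l) a := Iff.rfl

variable (P S : Multiset Formula)

def weakenSeq (s : Sequent) : Sequent := (P + s.1, s.2 + S)

lemma inst_weakenSeq {r : Rule} {s : Sequent} {o₁ o₂ : Option Sequent} (h : Inst r s o₁ o₂) :
    Inst r (weakenSeq P S s) (o₁.map (weakenSeq P S))
      (if r = Rule.box then o₂ else o₂.map (weakenSeq P S)) := by
  cases h <;>
    simp only [weakenSeq, Option.map_some, Option.map_none, Multiset.add_cons, Multiset.cons_add,
      reduceCtorEq, if_false, if_true, ← add_assoc] <;>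
    constructor

def weakenLab : Lab → Lab
  | l, [] => (l []).map (Prod.map id (weakenSeq P S))
  | l, false :: a => weakenLab (shift false l) a
  | l, true :: a => if RootIsBox l then l (true :: a) else weakenLab (shift true l) a

lemma shift_true_weakenLab_of_rootIsBox {l : Lab} (h : RootIsBox l) :
    shift true (weakenLab P S l) = shift true l :=
  funext fun _ => if_pos h

lemma shift_true_weakenLab_of_not_rootIsBox {l : Lab} (h : ¬ RootIsBox l) :
    shift true (weakenLab P S l) = weakenLab P S (shift true l) :=
  funext fun _ => if_neg h

lemma weakenLab_nil (l : Lab) :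
    weakenLab P S l [] = (l []).map (Prod.map id (weakenSeq P S)) := rfl

lemma map_snd_weakenLab_nil (l : Lab) :
    (weakenLab P S l []).map Prod.snd = ((l []).map Prod.snd).map (weakenSeq P S) := by
  rw [weakenLab_nil]
  cases l [] <;> rfl

lemma map_fst_weakenLab : ∀ (l : Lab) (a : List Bool),
    (weakenLab P S l a).map Prod.fst = (l a).map Prod.fst
  | l, [] => by
    rw [weakenLab_nil]
    cases l [] <;> rfl
  | l, false :: a => map_fst_weakenLab (shift false l) a
  | l, true :: a => by
    by_cases h : RootIsBox l
    · exact congrArg (Option.map Prod.fst) (congrFun (shift_true_weakenLab_of_rootIsBox P S h) a)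
    · change (shift true (weakenLab P S l) a).map Prod.fst = (shift true l a).map Prod.fst
      rw [shift_true_weakenLab_of_not_rootIsBox P S h, map_fst_weakenLab]

lemma weakenLab_eq_none_iff {l : Lab} {a : List Bool} :
    weakenLab P S l a = none ↔ l a = none := by
  rw [← Option.map_eq_none_iff (f := Prod.fst), map_fst_weakenLab, Option.map_eq_none_iff]

lemma isSome_weakenLab (l : Lab) (a : List Bool) :
    (weakenLab P S l a).isSome = (l a).isSome := by
  rw [← Option.isSome_map (f := Prod.fst), map_fst_weakenLab, Option.isSome_map]

lemma height_weakenLab (l : Lab) : height (weakenLab P S l) = height l := by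
  simp only [height, InMain, isSome_weakenLab, map_fst_weakenLab]

lemma map_snd_weakenLab_false (l : Lab) :
    (weakenLab P S l [false]).map Prod.snd = ((l [false]).map Prod.snd).map (weakenSeq P S) :=
  map_snd_weakenLab_nil P S (shift false l)

lemma map_snd_weakenLab_true {l : Lab} (h : ¬ RootIsBox l) :
    (weakenLab P S l [true]).map Prod.snd = ((l [true]).map Prod.snd).map (weakenSeq P S) := by
  have hshift : weakenLab P S l [true] = weakenLab P S (shift true l) [] :=
    congrFun (shift_true_weakenLab_of_not_rootIsBox P S h) []
  rw [hshift, map_snd_weakenLab_nil]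
  rfl

lemma weakenLab_true_of_rootIsBox {l : Lab} (h : RootIsBox l) :
    weakenLab P S l [true] = l [true] :=
  congrFun (shift_true_weakenLab_of_rootIsBox P S h) []

lemma weakenLab_eq_some {l : Lab} {r : Rule} {s : Sequent} (hl : l [] = some (r, s)) :
    weakenLab P S l [] = some (r, weakenSeq P S s) := by
  rw [weakenLab_nil, hl]
  rfl

lemma instAt_weakenLab : ∀ (a : List Bool) {l : Lab}, (∀ b, InstAt l b) →
    InstAt (weakenLab P S l) a
  | [], l, h => by
    rintro r s hs
    rw [weakenLab_nil, Option.map_eq_some_iff] at hs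
    obtain ⟨⟨r, s⟩, hl, ⟨⟩⟩ := hs
    have hweak := inst_weakenSeq P S (h [] r s hl)
    rw [List.nil_append, List.nil_append, map_snd_weakenLab_false]
    by_cases hb : RootIsBox l
    · rw [weakenLab_true_of_rootIsBox P S hb]
      rwa [if_pos ((rootIsBox_iff hl).1 hb)] at hweak
    · rw [map_snd_weakenLab_true P S hb]
      rwa [if_neg ((rootIsBox_iff hl).not.1 hb)] at hweak
  | false :: a, l, h => instAt_weakenLab a fun b => h (false :: b)
  | true :: a, l, h => by
    rw [instAt_cons_iff]
    by_cases hb : RootIsBox l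
    · rw [shift_true_weakenLab_of_rootIsBox P S hb]
      exact h (true :: a)
    · rw [shift_true_weakenLab_of_not_rootIsBox P S hb]
      exact instAt_weakenLab a fun b => h (true :: b)

def weaken (π : InfProof) : InfProof where
  lab := weakenLab P S π.lab
  root_some := by rw [isSome_weakenLab]; exact π.root_some
  nojunk a i h :=
    (weakenLab_eq_none_iff P S).2 (π.nojunk a i ((weakenLab_eq_none_iff P S).1 h))
  step a := instAt_weakenLab P S a π.step
  branch f hf N := by
    simp only [isSome_weakenLab] at hf
    simpa only [map_fst_weakenLab] using π.branch f hf N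

lemma sim_weakenLab {n : ℕ} {l m : Lab} (h : Sim n l m) :
    Sim n (weakenLab P S l) (weakenLab P S m) := by
  induction h with
  | zero l m => exact .zero _ _
  | leaf n l h => exact .leaf n _ ((height_weakenLab P S l).trans h)
  | bin n l m r s hr hl hm h₁ h₂ _ _ ih₁ ih₂ =>
    have hr' : r ≠ Rule.box := by rcases hr with rfl | rfl <;> simp
    have hl' := (rootIsBox_iff hl).not.2 hr'
    have hm' := (rootIsBox_iff hm).not.2 hr'
    refine .bin n _ _ r _ hr (weakenLab_eq_some P S hl) (weakenLab_eq_some P S hm) ?_ ?_ ih₁ ?_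
    · rw [map_snd_weakenLab_false, map_snd_weakenLab_false, h₁]
    · rw [map_snd_weakenLab_true P S hl', map_snd_weakenLab_true P S hm', h₂]
    · rwa [shift_true_weakenLab_of_not_rootIsBox P S hl',
        shift_true_weakenLab_of_not_rootIsBox P S hm']
  | un n l m r s hr hl hm h₁ _ ih =>
    refine .un n _ _ r _ hr (weakenLab_eq_some P S hl) (weakenLab_eq_some P S hm) ?_ ih
    rw [map_snd_weakenLab_false, map_snd_weakenLab_false, h₁]
  | box n l m s hl hm h₁ h₂ _ hs₂ ih₁ _ =>
    have hl' := (rootIsBox_iff hl).2 rfl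
    have hm' := (rootIsBox_iff hm).2 rfl
    refine .box n _ _ _ (weakenLab_eq_some P S hl) (weakenLab_eq_some P S hm) ?_ ?_ ih₁ ?_
    · rw [map_snd_weakenLab_false, map_snd_weakenLab_false, h₁]
    · rwa [weakenLab_true_of_rootIsBox P S hl', weakenLab_true_of_rootIsBox P S hm']
    · rwa [shift_true_weakenLab_of_rootIsBox P S hl', shift_true_weakenLab_of_rootIsBox P S hm']

lemma memP_weakenLab {n : ℕ} {l : Lab} (h : MemP n l) : MemP n (weakenLab P S l) := by
  induction h with
  | zero l => exact .zero _
  | leaf n l h => exact .leaf n _ ((height_weakenLab P S l).trans h)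
  | bin n l s hl _ _ ih₁ ih₂ =>
    refine .bin n _ _ (weakenLab_eq_some P S hl) ih₁ ?_
    rwa [shift_true_weakenLab_of_not_rootIsBox P S ((rootIsBox_iff hl).not.2 (by simp))]
  | un n l r s hr hl _ ih => exact .un n _ r _ hr (weakenLab_eq_some P S hl) ih
  | box n l s hl _ h₂ ih₁ _ =>
    refine .box n _ _ (weakenLab_eq_some P S hl) ih₁ ?_
    rwa [shift_true_weakenLab_of_rootIsBox P S ((rootIsBox_iff hl).2 rfl)]

lemma proves_weaken {π : InfProof} {Γ Δ : Multiset Formula} (h : Proves π (Γ, Δ)) :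
    Proves (weaken P S π) (P + Γ, Δ + S) :=
  let ⟨r, hr⟩ := h
  ⟨r, weakenLab_eq_some P S hr⟩

lemma adequate_weaken : Adequate (weaken P S) :=
  ⟨fun _ _ _ => sim_weakenLab P S, fun _ => memP_weakenLab P S,
    fun π => (height_weakenLab P S π.lab).le⟩

end Weakening

/-- weakening is strongly admissible in Grz∞ + cut. -/
theorem weakening_strongly_admissible (P S : Multiset Formula) :
    ∃ f : InfProof → InfProof, Adequate f ∧
      ∀ (π : InfProof) (Γ Δ : Multiset Formula),
        Proves π (Γ, Δ) → Proves (f π) (P + Γ, Δ + S) :=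
  ⟨Weakening.weaken P S, Weakening.adequate_weaken P S,
    fun _ _ _ => Weakening.proves_weaken P S⟩
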